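/- Suppose A_c := A − BK is Schur-stable and the terminal weight P ∈ ℝ^{n×n} satisfies the Lyapunov equation A_cᵀ P A_c + Q_c = P. Then for every horizon N ≥ 1 the condensed Hessian H_N is block Toeplitz: for all 0 ≤ j, k ≤ N−1, the (j,k) block satisfies (H_N)_{j,k} = T_{j−k}. In particular the blocks depend only on the difference j − k. -/

import Mathlib

open Matrix Filter
open scoped Kronecker

/-- `A` is Schur-stable: every complex eigenvalue has modulus `< 1`. -/
def SchurStable {n : ℕ} (A : Matrix (Fin n) (Fin n) ℝ) : Prop :=
  ∀ μ ∈ spectrum ℂ (A.map Complex.ofReal), ‖μ‖ < 1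

/-- The `d`-th block of the infinite block-Toeplitz matrix associated with the
condensed Hessian. -/
noncomputable def Tblk {n m : ℕ} (Ac : Matrix (Fin n) (Fin n) ℝ)
    (B : Matrix (Fin n) (Fin m) ℝ) (Qc : Matrix (Fin n) (Fin n) ℝ)
    (R : Matrix (Fin m) (Fin m) ℝ) (d : ℤ) : Matrix (Fin m) (Fin m) ℝ :=
  if 0 ≤ d then
    (∑' i : ℕ, Bᵀ * (Acᵀ) ^ i * Qc * Ac ^ (i + d.toNat) * B) + (if d = 0 then R else 0)
  else
    ((∑' i : ℕ, Bᵀ * (Acᵀ) ^ i * Qc * Ac ^ (i + (-d).toNat) * B))ᵀ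

/-- The `(j,k)` block (for `j ≥ k`) of the condensed Hessian with horizon `N`. -/
noncomputable def Hge {n m : ℕ} (Ac : Matrix (Fin n) (Fin n) ℝ)
    (B : Matrix (Fin n) (Fin m) ℝ) (Qc P : Matrix (Fin n) (Fin n) ℝ)
    (R : Matrix (Fin m) (Fin m) ℝ) (N j k : ℕ) : Matrix (Fin m) (Fin m) ℝ :=
  (∑ i ∈ Finset.range (N - j), Bᵀ * (Acᵀ) ^ i * Qc * Ac ^ (i + j - k) * B)
    + Bᵀ * (Acᵀ) ^ (N - j) * P * Ac ^ (N - k) * B + (if j = k then R else 0)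

/-- The condensed Hessian with horizon `N`, as an `Nm × Nm` real matrix. -/
noncomputable def Hmat {n m : ℕ} (Ac : Matrix (Fin n) (Fin n) ℝ)
    (B : Matrix (Fin n) (Fin m) ℝ) (Qc P : Matrix (Fin n) (Fin n) ℝ)
    (R : Matrix (Fin m) (Fin m) ℝ) (N : ℕ) :
    Matrix (Fin N × Fin m) (Fin N × Fin m) ℝ :=
  Matrix.of fun p q =>
    if (q.1 : ℕ) ≤ (p.1 : ℕ) then Hge Ac B Qc P R N p.1 q.1 p.2 q.2
    else (Hge Ac B Qc P R N q.1 p.1)ᵀ p.2 q.2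

/-- The matrix symbol of the condensed Hessian. -/
noncomputable def symb {n m : ℕ} (Ac : Matrix (Fin n) (Fin n) ℝ)
    (B : Matrix (Fin n) (Fin m) ℝ) (Qc : Matrix (Fin n) (Fin n) ℝ)
    (R : Matrix (Fin m) (Fin m) ℝ) (z : ℂ) : Matrix (Fin m) (Fin m) ℂ :=
  (z • ((z • (1 : Matrix (Fin n) (Fin n) ℂ) - Ac.map Complex.ofReal)⁻¹
      * B.map Complex.ofReal))ᴴ
    * Qc.map Complex.ofReal
    * (z • ((z • (1 : Matrix (Fin n) (Fin n) ℂ) - Ac.map Complex.ofReal)⁻¹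
      * B.map Complex.ofReal))
  + R.map Complex.ofReal


/-!
By the Lyapunov equation every summand telescopes: with
`F i = Bᵀ (A_cᵀ)^i P A_c^(i+d) B` one has `Bᵀ (A_cᵀ)^i Q_c A_c^(i+d) B = F i - F (i+1)`.
So the finite sum in the block `(j, k)`, `j ≥ k`, plus its terminal term collapses to
`F 0 = Bᵀ P A_c^(j-k) B`. The series defining `T_(j-k)` collapses to the same matrix, since
Schur stability makes `‖A_c^i‖` summable (Gelfand's formula) and hence `F i → 0`.
-/

open scoped Topology

theorem summable_norm_pow_of_spectralRadius_lt_one {A : Type*} [NormedRing A]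
    [NormedAlgebra ℂ A] [CompleteSpace A] {a : A} (h : spectralRadius ℂ a < 1) :
    Summable fun k : ℕ => ‖a ^ k‖ := by
  obtain ⟨ρ, hρa, hρ1⟩ := ENNReal.lt_iff_exists_nnreal_btwn.mp h
  refine (summable_geometric_of_lt_one ρ.2 (mod_cast hρ1)).of_norm_bounded_eventually_nat ?_
  filter_upwards [(spectrum.pow_norm_pow_one_div_tendsto_nhds_spectralRadius a).eventually_lt_const
    hρa, eventually_gt_atTop 0] with k hk hk0
  rw [ENNReal.ofReal_lt_coe_iff (by positivity), one_div] at hk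
  have := (Real.rpow_inv_lt_iff_of_pos (norm_nonneg (a ^ k)) ρ.2 (Nat.cast_pos.mpr hk0)).mp hk
  simpa using this.le

theorem hasSum_sub_succ_of_tendsto {G : Type*} [AddCommGroup G] [TopologicalSpace G]
    [IsTopologicalAddGroup G] [T2Space G] {f : ℕ → G} {a : G}
    (hs : Summable fun i => f i - f (i + 1)) (hf : Tendsto f atTop (𝓝 a)) :
    HasSum (fun i => f i - f (i + 1)) (f 0 - a) := by
  rw [hs.hasSum_iff_tendsto_nat]
  simp_rw [Finset.sum_range_sub']
  exact tendsto_const_nhds.sub hf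

section Frobenius

open scoped Matrix.Norms.Frobenius

theorem SchurStable.spectralRadius_lt_one {n : ℕ} {Ac : Matrix (Fin n) (Fin n) ℝ}
    (h : SchurStable Ac) : spectralRadius ℂ (Ac.map Complex.ofReal) < 1 := by
  rcases (spectrum ℂ (Ac.map Complex.ofReal)).eq_empty_or_nonempty with hσ | hσ
  · simp [spectralRadius, hσ]
  · exact_mod_cast spectrum.spectralRadius_lt_of_forall_lt_of_nonempty hσ
      (r := 1) fun μ hμ => mod_cast h μ hμ

theorem SchurStable.summable_norm_pow {n : ℕ} {Ac : Matrix (Fin n) (Fin n) ℝ}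
    (h : SchurStable Ac) : Summable fun k : ℕ => ‖Ac ^ k‖ := by
  convert summable_norm_pow_of_spectralRadius_lt_one h.spectralRadius_lt_one using 2 with k
  change _ = ‖(Ac.map Complex.ofRealHom) ^ k‖
  rw [← Matrix.map_pow]
  exact (Matrix.frobenius_norm_map_eq _ _ Complex.norm_real).symm

-- The Frobenius norm is submultiplicative on rectangular matrices and transpose-invariant.
theorem SchurStable.summable_mul_pow {n m : ℕ} {Ac : Matrix (Fin n) (Fin n) ℝ}
    (h : SchurStable Ac) (C : Matrix (Fin m) (Fin n) ℝ) (X : Matrix (Fin n) (Fin n) ℝ)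
    (D : Matrix (Fin n) (Fin m) ℝ) (d : ℕ) :
    Summable fun i : ℕ => C * (Acᵀ) ^ i * X * Ac ^ (i + d) * D := by
  have hs := h.summable_norm_pow
  refine (hs.mul_left (‖C‖ * ‖X‖ * ‖D‖)).of_norm_bounded_eventually_nat ?_
  have hshift : Tendsto (fun i => ‖Ac ^ (i + d)‖) atTop (𝓝 0) :=
    ((summable_nat_add_iff d).mpr hs).tendsto_atTop_zero
  filter_upwards [hshift.eventually_le_const zero_lt_one] with i hi
  calc ‖C * (Acᵀ) ^ i * X * Ac ^ (i + d) * D‖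
      ≤ ‖C‖ * ‖(Acᵀ) ^ i‖ * ‖X‖ * ‖Ac ^ (i + d)‖ * ‖D‖ := by
        grw [Matrix.frobenius_norm_mul, Matrix.frobenius_norm_mul, Matrix.frobenius_norm_mul,
          Matrix.frobenius_norm_mul]
    _ ≤ ‖C‖ * ‖Ac ^ i‖ * ‖X‖ * 1 * ‖D‖ := by
        rw [← Matrix.transpose_pow, Matrix.frobenius_norm_transpose]
        gcongr
    _ = ‖C‖ * ‖X‖ * ‖D‖ * ‖Ac ^ i‖ := by ring

end Frobenius

section Toeplitz

variable {n m : ℕ} {Ac Qc P : Matrix (Fin n) (Fin n) ℝ} (B : Matrix (Fin n) (Fin m) ℝ)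

theorem lyapunov_sandwich_eq (hlyap : Acᵀ * P * Ac + Qc = P) (d i : ℕ) :
    Bᵀ * (Acᵀ) ^ i * Qc * Ac ^ (i + d) * B
      = Bᵀ * (Acᵀ) ^ i * P * Ac ^ (i + d) * B
        - Bᵀ * (Acᵀ) ^ (i + 1) * P * Ac ^ (i + 1 + d) * B := by
  rw [eq_sub_of_add_eq' hlyap, pow_succ, add_right_comm, pow_succ']
  simp only [Matrix.mul_sub, Matrix.sub_mul, Matrix.mul_assoc]

theorem hasSum_lyapunov_sandwich (hstab : SchurStable Ac) (hlyap : Acᵀ * P * Ac + Qc = P)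
    (d : ℕ) :
    HasSum (fun i : ℕ => Bᵀ * (Acᵀ) ^ i * Qc * Ac ^ (i + d) * B) (Bᵀ * P * Ac ^ d * B) := by
  have hs := hstab.summable_mul_pow Bᵀ Qc B d
  simp_rw [lyapunov_sandwich_eq B hlyap d] at hs ⊢
  have := hasSum_sub_succ_of_tendsto hs (hstab.summable_mul_pow Bᵀ P B d).tendsto_atTop_zero
  rwa [pow_zero, zero_add, sub_zero, Matrix.mul_one] at this

theorem Hge_eq_of_le (R : Matrix (Fin m) (Fin m) ℝ) (hlyap : Acᵀ * P * Ac + Qc = P)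
    {N j k : ℕ} (hkj : k ≤ j) (hjN : j ≤ N) :
    Hge Ac B Qc P R N j k = Bᵀ * P * Ac ^ (j - k) * B + if j = k then R else 0 := by
  have hsum : ∀ i ∈ Finset.range (N - j), Bᵀ * (Acᵀ) ^ i * Qc * Ac ^ (i + j - k) * B
      = Bᵀ * (Acᵀ) ^ i * P * Ac ^ (i + (j - k)) * B
        - Bᵀ * (Acᵀ) ^ (i + 1) * P * Ac ^ (i + 1 + (j - k)) * B := fun i _ => by
    rw [Nat.add_sub_assoc hkj, lyapunov_sandwich_eq B hlyap]
  rw [Hge, Finset.sum_congr rfl hsum, Finset.sum_range_sub',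
    show N - k = N - j + (j - k) by omega]
  simp

theorem Tblk_natCast (R : Matrix (Fin m) (Fin m) ℝ) (hstab : SchurStable Ac)
    (hlyap : Acᵀ * P * Ac + Qc = P) (d : ℕ) :
    Tblk Ac B Qc R d = Bᵀ * P * Ac ^ d * B + if d = 0 then R else 0 := by
  simp [Tblk, (hasSum_lyapunov_sandwich B hstab hlyap d).tsum_eq]

theorem Tblk_neg_natCast (R : Matrix (Fin m) (Fin m) ℝ) (hstab : SchurStable Ac)
    (hlyap : Acᵀ * P * Ac + Qc = P) {d : ℕ} (hd : 0 < d) :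
    Tblk Ac B Qc R (-d) = (Bᵀ * P * Ac ^ d * B)ᵀ := by
  rw [Tblk, if_neg (by omega), neg_neg, Int.toNat_natCast,
    (hasSum_lyapunov_sandwich B hstab hlyap d).tsum_eq]

end Toeplitz

theorem Hmat_block {n m : ℕ} (Ac : Matrix (Fin n) (Fin n) ℝ) (B : Matrix (Fin n) (Fin m) ℝ)
    (Qc P : Matrix (Fin n) (Fin n) ℝ) (R : Matrix (Fin m) (Fin m) ℝ) {N : ℕ} (j k : Fin N) :
    (Matrix.of fun a b : Fin m => Hmat Ac B Qc P R N (j, a) (k, b))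
      = if (k : ℕ) ≤ j then Hge Ac B Qc P R N j k else (Hge Ac B Qc P R N k j)ᵀ := by
  ext a b
  simp only [Hmat, Matrix.of_apply]
  split_ifs <;> rfl

theorem stmt9_general {n m : ℕ}
    (A : Matrix (Fin n) (Fin n) ℝ) (B : Matrix (Fin n) (Fin m) ℝ)
    (K : Matrix (Fin m) (Fin n) ℝ)
    (Q : Matrix (Fin n) (Fin n) ℝ) (R : Matrix (Fin m) (Fin m) ℝ)
    (hstab : SchurStable (A - B * K))
    (P : Matrix (Fin n) (Fin n) ℝ)
    (hlyap : (A - B * K)ᵀ * P * (A - B * K) + (Q + Kᵀ * R * K) = P) :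
    ∀ N : ℕ, 1 ≤ N → ∀ j k : Fin N,
      (Matrix.of fun a b : Fin m =>
          Hmat (A - B * K) B (Q + Kᵀ * R * K) P R N (j, a) (k, b))
        = Tblk (A - B * K) B (Q + Kᵀ * R * K) R ((j : ℤ) - (k : ℤ)) := by
  intro N _ j k
  rw [Hmat_block]
  split_ifs with hkj
  · rw [Hge_eq_of_le B R hlyap hkj j.isLt.le, show (j : ℤ) - k = ((j - k : ℕ) : ℤ) by omega,
      Tblk_natCast B R hstab hlyap]
    simp only [Nat.sub_eq_zero_iff_le, hkj.ge_iff_eq']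
  · rw [Hge_eq_of_le B R hlyap (by omega) k.isLt.le, if_neg (by omega), add_zero,
      show (j : ℤ) - k = -((k - j : ℕ) : ℤ) by omega, Tblk_neg_natCast B R hstab hlyap (by omega)]

/-- If `A - B*K` is Schur-stable and the terminal weight `P` solves the Lyapunov
equation `A_cᵀ P A_c + Q_c = P`, then the condensed Hessian is block Toeplitz:
each `(j,k)` block equals `T_{j-k}`. -/
theorem stmt9 {n m : ℕ} (hn : 0 < n) (hm : 0 < m)
    (A : Matrix (Fin n) (Fin n) ℝ) (B : Matrix (Fin n) (Fin m) ℝ)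
    (K : Matrix (Fin m) (Fin n) ℝ)
    (Q : Matrix (Fin n) (Fin n) ℝ) (R : Matrix (Fin m) (Fin m) ℝ)
    (hQ : Q.PosSemidef) (hR : R.PosDef)
    (hstab : SchurStable (A - B * K))
    (P : Matrix (Fin n) (Fin n) ℝ) (hP : P.IsSymm)
    (hlyap : (A - B * K)ᵀ * P * (A - B * K) + (Q + Kᵀ * R * K) = P) :
    ∀ N : ℕ, 1 ≤ N → ∀ j k : Fin N,
      (Matrix.of fun a b : Fin m =>
          Hmat (A - B * K) B (Q + Kᵀ * R * K) P R N (j, a) (k, b))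
        = Tblk (A - B * K) B (Q + Kᵀ * R * K) R ((j : ℤ) - (k : ℤ)) :=
  stmt9_general A B K Q R hstab P hlyap
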